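/- Let $(F_i)$ be a sequence of sets in a Banach space $X$. Then the following are equivalent: (1) for every Banach space $Y$ and every compact linear operator $T:X\to Y$ one has $\limsup_{i\to\infty}\sup_{f_i\in F_i}\|Tf_i\|_Y=0$; (2) for every $f^*\in X^*$ and every choice of a subsequence $f_{i(k)}\in F_{i(k)}$ one has $\lim_{k\to\infty}\langle f_{i(k)},f^*\rangle=0$. -/
import Mathlib


open Filter

/-- Characterization of sequences of sets admissible for testing compactness:
admissibility is equivalent to uniform weak convergence to zero along subsequences. -/
theorem stmt0.{u, v} {X : Type u} [NormedAddCommGroup X] [NormedSpace ℂ X]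
    [CompleteSpace X] (F : ℕ → Set X) :
    (∀ (Y : Type v) [NormedAddCommGroup Y] [NormedSpace ℂ Y] [CompleteSpace Y]
      (T : X →L[ℂ] Y), IsCompactOperator ⇑T →
        ∀ ε : ℝ, 0 < ε → ∃ N : ℕ, ∀ i ≥ N, ∀ f ∈ F i, ‖T f‖ ≤ ε) ↔
    (∀ (φ : X →L[ℂ] ℂ) (idx : ℕ → ℕ), StrictMono idx →
      ∀ f : ℕ → X, (∀ k, f k ∈ F (idx k)) →
        Tendsto (fun k => φ (f k)) atTop (nhds (0 : ℂ))) := by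
  constructor
  · -- (1) → (2)
    intro h1 φ idx hidx f hf
    set e : ULift.{v} ℂ ≃L[ℂ] ℂ := ContinuousLinearEquiv.ulift
    set T : X →L[ℂ] ULift.{v} ℂ := (e.symm : ℂ →L[ℂ] ULift.{v} ℂ) ∘L φ with hTdef
    have hcomp : IsCompactOperator ⇑T := by
      refine ⟨(e.symm : ℂ →L[ℂ] ULift.{v} ℂ) '' Metric.closedBall 0 ‖φ‖,
        (isCompact_closedBall (0 : ℂ) ‖φ‖).image e.symm.continuous, ?_⟩
      filter_upwards [Metric.closedBall_mem_nhds (0 : X) one_pos] with x hx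
      have hφx : φ x ∈ Metric.closedBall (0 : ℂ) ‖φ‖ := by
        rw [Metric.mem_closedBall, dist_zero_right]
        calc ‖φ x‖ ≤ ‖φ‖ * ‖x‖ := φ.le_opNorm x
          _ ≤ ‖φ‖ * 1 := by
              refine mul_le_mul_of_nonneg_left ?_ (norm_nonneg _)
              simpa [dist_zero_right] using hx
          _ = ‖φ‖ := mul_one _
      exact Set.mem_image_of_mem _ hφx
    rw [NormedAddCommGroup.tendsto_nhds_zero]
    intro ε hε
    obtain ⟨N, hN⟩ := h1 (ULift.{v} ℂ) T hcomp (ε / 2) (by linarith)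
    filter_upwards [eventually_ge_atTop N] with k hk
    have h := hN (idx k) (le_trans hk hidx.le_apply) (f k) (hf k)
    have hnorm : ‖T (f k)‖ = ‖φ (f k)‖ := rfl
    rw [hnorm] at h
    linarith
  · -- (2) → (1)
    intro h2 Y _ _ _ T hT ε hε
    by_contra hc
    push_neg at hc
    choose i hge f hmem hnorm using hc
    let a : ℕ → ℕ := fun k => Nat.rec 0 (fun _ m => i m + 1) k
    have ha : ∀ k, a (k + 1) = i (a k) + 1 := fun k => rfl
    set idx : ℕ → ℕ := fun k => i (a k) with hidxdef
    have hidx : StrictMono idx := by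
      refine strictMono_nat_of_lt_succ fun k => ?_
      have h1 : idx k < a (k + 1) := by rw [ha]; exact Nat.lt_succ_self _
      exact lt_of_lt_of_le h1 (hge (a (k + 1)))
    set g : ℕ → X := fun k => f (a k) with hg
    have hgF : ∀ k, g k ∈ F (idx k) := fun k => hmem (a k)
    have hgn : ∀ k, ε < ‖T (g k)‖ := fun k => hnorm (a k)
    have hweak : ∀ (ψ : ℕ → ℕ), StrictMono ψ → ∀ φ : X →L[ℂ] ℂ,
        Tendsto (fun j => φ (g (ψ j))) atTop (nhds (0 : ℂ)) := by
      intro ψ hψ φ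
      exact h2 φ (idx ∘ ψ) (hidx.comp hψ) (g ∘ ψ) (fun j => hgF (ψ j))
    -- boundedness of g via Banach–Steinhaus in the double dual
    obtain ⟨C, hC⟩ : ∃ C, ∀ k, ‖g k‖ ≤ C := by
      obtain ⟨C', hC'⟩ := banach_steinhaus
        (g := fun k => NormedSpace.inclusionInDoubleDual ℂ X (g k)) (fun φ => by
          obtain ⟨c, hc⟩ := (hweak id strictMono_id φ).norm.bddAbove_range
          exact ⟨c, fun k => hc (Set.mem_range_self k)⟩)
      refine ⟨C', fun k => ?_⟩
      have heq : ‖NormedSpace.inclusionInDoubleDual ℂ X (g k)‖ = ‖g k‖ :=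
        (NormedSpace.inclusionInDoubleDualLi ℂ (E := X)).norm_map (g k)
      rw [← heq]; exact hC' k
    -- compactness of image
    have hT' : IsCompactOperator ⇑(T : X →ₗ[ℂ] Y) := hT
    obtain ⟨K, hK, hKs⟩ := hT'.image_subset_compact_of_bounded
      (Metric.isBounded_closedBall (x := (0 : X)) (r := C))
    have hmemK : ∀ k, T (g k) ∈ K := fun k =>
      hKs ⟨g k, by simpa [Metric.mem_closedBall, dist_zero_right] using hC k, rfl⟩
    obtain ⟨y, hyK, ψ, hψ, hconv⟩ := hK.tendsto_subseq hmemK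
    have hy0 : y = 0 := by
      apply NormedSpace.eq_zero_of_forall_dual_eq_zero ℂ
      intro χ
      have h1 : Tendsto (fun j => χ (T (g (ψ j)))) atTop (nhds (χ y)) :=
        (χ.continuous.tendsto y).comp hconv
      have h2' : Tendsto (fun j => (χ ∘L T) (g (ψ j))) atTop (nhds (0 : ℂ)) :=
        hweak ψ hψ (χ ∘L T)
      exact tendsto_nhds_unique h1 h2'
    rw [hy0] at hconv
    have := (NormedAddCommGroup.tendsto_nhds_zero.mp hconv ε hε).exists
    obtain ⟨j, hj⟩ := this
    exact absurd hj (not_lt.mpr (le_of_lt (hgn (ψ j))))
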